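/- The Ricci tensor of the torsion-free affine connection on ℝ³ with nonzero Christoffel symbols ∇_{∂₁}∂₁ = 0, ∇_{∂₁}∂₂ = ∇_{∂₂}∂₁ = −x₃∂₁, ∇_{∂₁}∂₃ = ∇_{∂₃}∂₁ = x₂∂₁ is cyclic parallel. -/

import Mathlib

open scoped BigOperators

noncomputable section AffineSzabo

variable {ι : Type} [Fintype ι] [DecidableEq ι]

/-- Points of the coordinate chart. -/
abbrev Pt (ι : Type) := ι → ℝ
/-- Vector fields in coordinates. -/
abbrev VF (ι : Type) := Pt ι → Pt ι
/-- Christoffel symbols `Γ p i j k = Γ^i_{jk}(p)` of a torsion-free affine connection. -/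
abbrev Chr (ι : Type) := Pt ι → ι → ι → ι → ℝ

/-- Partial derivative in the `j`-th coordinate direction. -/
def pd (j : ι) (f : Pt ι → ℝ) (p : Pt ι) : ℝ :=
  fderiv ℝ f p (Pi.single j 1)

/-- The covariant derivative `∇_X Y` of the affine connection with Christoffel symbols `Γ`. -/
def conn (Γ : Chr ι) (X Y : VF ι) : VF ι :=
  fun p i => fderiv ℝ (fun q => Y q i) p (X p) + ∑ j, ∑ k, Γ p i j k * X p j * Y p k

/-- The Lie bracket of vector fields. -/
def bracket (X Y : VF ι) : VF ι :=
  fun p i => fderiv ℝ (fun q => Y q i) p (X p) - fderiv ℝ (fun q => X q i) p (Y p)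

/-- The curvature tensor `R(X,Y)Z = ∇_X∇_Y Z − ∇_Y∇_X Z − ∇_{[X,Y]}Z`. -/
def curv (Γ : Chr ι) (X Y Z : VF ι) : VF ι :=
  conn Γ X (conn Γ Y Z) - conn Γ Y (conn Γ X Z) - conn Γ (bracket X Y) Z

/-- The covariant derivative of the curvature tensor,
`(∇_X R)(Y,Z)W = ∇_X(R(Y,Z)W) − R(∇_X Y,Z)W − R(Y,∇_X Z)W − R(Y,Z)∇_X W`. -/
def covCurv (Γ : Chr ι) (X Y Z W : VF ι) : VF ι :=
  conn Γ X (curv Γ Y Z W) - curv Γ (conn Γ X Y) Z W - curv Γ Y (conn Γ X Z) W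
    - curv Γ Y Z (conn Γ X W)

/-- The affine Szabó operator `S(X)Y = (∇_X R)(Y,X)X`. -/
def szabo (Γ : Chr ι) (X Y : VF ι) : VF ι := covCurv Γ X Y X X

/-- The constant vector field extending a tangent vector `v`. -/
def cvf (v : Pt ι) : VF ι := fun _ => v

/-- The matrix of the affine Szabó operator `S(X)` at the point `p` with respect to the
tangent vector `X = v`, in the coordinate basis. -/
def szaboMat (Γ : Chr ι) (p v : Pt ι) : Matrix ι ι ℝ :=
  Matrix.of fun i m => szabo Γ (cvf v) (cvf (Pi.single m 1)) p i

/-- The Ricci tensor `Ric(X,Y) = trace (Z ↦ R(Z,X)Y)`. -/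
def ricci (Γ : Chr ι) (X Y : VF ι) (p : Pt ι) : ℝ :=
  ∑ i, curv Γ (cvf (Pi.single i 1)) X Y p i

/-- The covariant derivative of the Ricci tensor,
`(∇_X Ric)(Z,W) = X(Ric(Z,W)) − Ric(∇_X Z,W) − Ric(Z,∇_X W)`. -/
def covRic (Γ : Chr ι) (X Z W : VF ι) (p : Pt ι) : ℝ :=
  fderiv ℝ (ricci Γ Z W) p (X p) - ricci Γ (conn Γ X Z) W p - ricci Γ Z (conn Γ X W) p

/-- A vector field is smooth if its components are smooth. -/
def SmoothVF (X : VF ι) : Prop := ∀ i, ContDiff ℝ (⊤ : ℕ∞) fun p => X p i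

/-- A connection is smooth if its Christoffel symbols are smooth. -/
def SmoothChr (Γ : Chr ι) : Prop := ∀ i j k, ContDiff ℝ (⊤ : ℕ∞) fun p => Γ p i j k

/-- The Ricci tensor of `Γ` is cyclic parallel: `(∇_X Ric)(X,X) = 0` for all vector fields `X`. -/
def CyclicParallelRic (Γ : Chr ι) : Prop :=
  ∀ X : VF ι, SmoothVF X → ∀ p, covRic Γ X X X p = 0

/-- The connection is affine Szabó: every affine Szabó operator is nilpotent. -/
def AffineSzabo (Γ : Chr ι) : Prop :=
  ∀ p v : Pt ι, IsNilpotent (szaboMat Γ p v)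


/-- The connection of Case 1: `∇_{∂₁}∂₁ = f₁∂₁`, `∇_{∂₁}∂₂ = ∇_{∂₂}∂₁ = f₂∂₁`,
`∇_{∂₁}∂₃ = ∇_{∂₃}∂₁ = f₃∂₁`, all other Christoffel symbols zero. -/
def gammaA (f1 f2 f3 : Pt (Fin 3) → ℝ) : Chr (Fin 3) := fun p i j k =>
  if i = 0 then
    if j = 0 ∧ k = 0 then f1 p
    else if (j = 0 ∧ k = 1) ∨ (j = 1 ∧ k = 0) then f2 p
    else if (j = 0 ∧ k = 2) ∨ (j = 2 ∧ k = 0) then f3 p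
    else 0
  else 0

namespace Ex33

def Γex : Chr (Fin 3) := gammaA (fun _ => 0) (fun p => -(p 2)) (fun p => p 1)

lemma conn_ex (A B : VF (Fin 3)) (p : Pt (Fin 3)) (i : Fin 3) :
    conn Γex A B p i = fderiv ℝ (fun q => B q i) p (A p) +
      (if i = 0 then -(p 2) * (A p 0 * B p 1 + A p 1 * B p 0)
        + p 1 * (A p 0 * B p 2 + A p 2 * B p 0) else 0) := by
  unfold conn Γex gammaA
  simp only [Fin.sum_univ_three]
  fin_cases i <;> simp [Fin.ext_iff] <;> ring

end Ex33
namespace Ex33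

lemma Dcoord (i : Fin 3) (p v : Pt (Fin 3)) :
    fderiv ℝ (fun q : Pt (Fin 3) => q i) p v = v i := by
  change fderiv ℝ (⇑(ContinuousLinearMap.proj (R := ℝ) (φ := fun _ : Fin 3 => ℝ) i)) p v = v i
  rw [ContinuousLinearMap.fderiv]; rfl

lemma Dadd {f g : Pt (Fin 3) → ℝ} {p : Pt (Fin 3)} (hf : DifferentiableAt ℝ f p)
    (hg : DifferentiableAt ℝ g p) (v : Pt (Fin 3)) :
    fderiv ℝ (fun q => f q + g q) p v = fderiv ℝ f p v + fderiv ℝ g p v := by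
  rw [(hf.hasFDerivAt.fun_add hg.hasFDerivAt).fderiv]; rfl

lemma Dsub {f g : Pt (Fin 3) → ℝ} {p : Pt (Fin 3)} (hf : DifferentiableAt ℝ f p)
    (hg : DifferentiableAt ℝ g p) (v : Pt (Fin 3)) :
    fderiv ℝ (fun q => f q - g q) p v = fderiv ℝ f p v - fderiv ℝ g p v := by
  rw [(hf.hasFDerivAt.fun_sub hg.hasFDerivAt).fderiv]; rfl

lemma Dneg {f : Pt (Fin 3) → ℝ} {p : Pt (Fin 3)} (v : Pt (Fin 3)) :
    fderiv ℝ (fun q => -(f q)) p v = -(fderiv ℝ f p v) := by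
  rw [fderiv_fun_neg]; rfl

lemma Dmul {f g : Pt (Fin 3) → ℝ} {p : Pt (Fin 3)} (hf : DifferentiableAt ℝ f p)
    (hg : DifferentiableAt ℝ g p) (v : Pt (Fin 3)) :
    fderiv ℝ (fun q => f q * g q) p v = fderiv ℝ f p v * g p + f p * fderiv ℝ g p v := by
  rw [(hf.hasFDerivAt.fun_mul hg.hasFDerivAt).fderiv]
  simp [ContinuousLinearMap.add_apply, ContinuousLinearMap.smul_apply]
  ring

lemma diff_fderiv (f : Pt (Fin 3) → ℝ) (hf : ContDiff ℝ (⊤ : ℕ∞) f) :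
    Differentiable ℝ (fun q => fderiv ℝ f q) :=
  (hf.fderiv_right (m := (⊤ : ℕ∞)) (by simp)).differentiable (by simp)

lemma diff_VF {X : VF (Fin 3)} (hX : SmoothVF X) : Differentiable ℝ X :=
  (contDiff_pi.2 hX).differentiable (by simp)

lemma hasFD_VF {X : VF (Fin 3)} (hX : SmoothVF X) (p : Pt (Fin 3)) :
    HasFDerivAt X (ContinuousLinearMap.pi fun i => fderiv ℝ (fun q => X q i) p) p :=
  hasFDerivAt_pi.2 fun i => (((hX i).differentiable (by simp)) p).hasFDerivAt

/-- derivative of `q ↦ (fderiv f q) (X q)` -/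
lemma DfdA {f : Pt (Fin 3) → ℝ} (hf : ContDiff ℝ (⊤ : ℕ∞) f) {X : VF (Fin 3)} (hX : SmoothVF X)
    (p v : Pt (Fin 3)) :
    fderiv ℝ (fun q => fderiv ℝ f q (X q)) p v
      = fderiv ℝ (fderiv ℝ f) p v (X p)
        + fderiv ℝ f p (fun i => fderiv ℝ (fun q => X q i) p v) := by
  have hφ : HasFDerivAt (fderiv ℝ f) (fderiv ℝ (fderiv ℝ f) p) p :=
    ((diff_fderiv f hf) p).hasFDerivAt
  rw [(hφ.clm_apply (hasFD_VF hX p)).fderiv]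
  simp [ContinuousLinearMap.add_apply, ContinuousLinearMap.flip_apply]
  ring

/-- derivative of `q ↦ (fderiv f q) w`, constant direction -/
lemma DfdC {f : Pt (Fin 3) → ℝ} (hf : ContDiff ℝ (⊤ : ℕ∞) f) (p v w : Pt (Fin 3)) :
    fderiv ℝ (fun q => fderiv ℝ f q w) p v = fderiv ℝ (fderiv ℝ f) p v w := by
  have hφ : HasFDerivAt (fderiv ℝ f) (fderiv ℝ (fderiv ℝ f) p) p :=
    ((diff_fderiv f hf) p).hasFDerivAt
  rw [(hφ.clm_apply (hasFDerivAt_const w p)).fderiv]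
  simp

lemma Dsymm {f : Pt (Fin 3) → ℝ} (hf : ContDiff ℝ (⊤ : ℕ∞) f) (p v w : Pt (Fin 3)) :
    fderiv ℝ (fderiv ℝ f) p v w = fderiv ℝ (fderiv ℝ f) p w v :=
  second_derivative_symmetric (fun y => ((hf.differentiable (by simp)) y).hasFDerivAt)
    (((diff_fderiv f hf) p).hasFDerivAt) v w

lemma diff_fd_apply {f : Pt (Fin 3) → ℝ} (hf : ContDiff ℝ (⊤ : ℕ∞) f) {X : VF (Fin 3)}
    (hX : SmoothVF X) : Differentiable ℝ (fun q => fderiv ℝ f q (X q)) :=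
  (diff_fderiv f hf).clm_apply (diff_VF hX)

end Ex33
namespace Ex33

lemma curv_ne (Z W : VF (Fin 3)) (hZ : SmoothVF Z) (hW : SmoothVF W)
    (p v : Pt (Fin 3)) (m : Fin 3) (hm : ¬ m = 0) :
    curv Γex (cvf v) Z W p m = 0 := by
  have h1 : (fun q => conn Γex Z W q m) = fun q => fderiv ℝ (fun r => W r m) q (Z q) := by
    funext q; rw [conn_ex]; simp [hm]
  have h2 : (fun q => conn Γex (cvf v) W q m) = fun q => fderiv ℝ (fun r => W r m) q v := by
    funext q; rw [conn_ex]; simp [hm, cvf]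
  have h3 : bracket (cvf v) Z p = fun i' => fderiv ℝ (fun r => Z r i') p v := by
    funext i'; simp [bracket, cvf]
  have t1 : conn Γex (cvf v) (conn Γex Z W) p m
      = fderiv ℝ (fun q => fderiv ℝ (fun r => W r m) q (Z q)) p v := by
    rw [conn_ex, if_neg hm, h1]; simp [cvf]
  have t2 : conn Γex Z (conn Γex (cvf v) W) p m
      = fderiv ℝ (fun q => fderiv ℝ (fun r => W r m) q v) p (Z p) := by
    rw [conn_ex, if_neg hm, h2]; simp
  have t3 : conn Γex (bracket (cvf v) Z) W p m
      = fderiv ℝ (fun r => W r m) p (fun i' => fderiv ℝ (fun r => Z r i') p v) := by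
    rw [conn_ex, if_neg hm, h3]; simp
  simp only [curv, Pi.sub_apply]
  rw [t1, t2, t3, DfdA (hW m) hZ, DfdC (hW m), Dsymm (hW m)]
  ring

end Ex33
namespace Ex33

lemma dcoordAt (i : Fin 3) (p : Pt (Fin 3)) :
    DifferentiableAt ℝ (fun q : Pt (Fin 3) => q i) p := by
  exact (contDiff_pi.mp contDiff_id i).differentiable (by simp : (1 : WithTop ℕ∞) ≠ 0) p

lemma DQ (Z W : VF (Fin 3)) (hZ : SmoothVF Z) (hW : SmoothVF W) (p v : Pt (Fin 3)) :
    fderiv ℝ (fun q => -(q 2) * (Z q 0 * W q 1 + Z q 1 * W q 0)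
        + q 1 * (Z q 0 * W q 2 + Z q 2 * W q 0)) p v
      = -(v 2) * (Z p 0 * W p 1 + Z p 1 * W p 0)
        + -(p 2) * (fderiv ℝ (fun q => Z q 0) p v * W p 1 + Z p 0 * fderiv ℝ (fun q => W q 1) p v
            + (fderiv ℝ (fun q => Z q 1) p v * W p 0 + Z p 1 * fderiv ℝ (fun q => W q 0) p v))
        + (v 1 * (Z p 0 * W p 2 + Z p 2 * W p 0)
          + p 1 * (fderiv ℝ (fun q => Z q 0) p v * W p 2 + Z p 0 * fderiv ℝ (fun q => W q 2) p v
            + (fderiv ℝ (fun q => Z q 2) p v * W p 0 + Z p 2 * fderiv ℝ (fun q => W q 0) p v))) := by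
  have dZ : ∀ i, DifferentiableAt ℝ (fun q => Z q i) p := fun i => ((hZ i).differentiable (by simp)) p
  have dW : ∀ i, DifferentiableAt ℝ (fun q => W q i) p := fun i => ((hW i).differentiable (by simp)) p
  have d2 : DifferentiableAt ℝ (fun q : Pt (Fin 3) => -(q 2)) p := (dcoordAt 2 p).neg
  have s1 : DifferentiableAt ℝ (fun q => Z q 0 * W q 1 + Z q 1 * W q 0) p :=
    ((dZ 0).mul (dW 1)).add ((dZ 1).mul (dW 0))
  have s2 : DifferentiableAt ℝ (fun q => Z q 0 * W q 2 + Z q 2 * W q 0) p :=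
    ((dZ 0).mul (dW 2)).add ((dZ 2).mul (dW 0))
  rw [Dadd (d2.fun_mul s1) ((dcoordAt 1 p).fun_mul s2), Dmul d2 s1, Dmul (dcoordAt 1 p) s2,
    Dadd ((dZ 0).fun_mul (dW 1)) ((dZ 1).fun_mul (dW 0)), Dmul (dZ 0) (dW 1), Dmul (dZ 1) (dW 0),
    Dadd ((dZ 0).fun_mul (dW 2)) ((dZ 2).fun_mul (dW 0)), Dmul (dZ 0) (dW 2), Dmul (dZ 2) (dW 0),
    Dneg, Dcoord, Dcoord]

end Ex33
namespace Ex33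

lemma Qdiff (Z W : VF (Fin 3)) (hZ : SmoothVF Z) (hW : SmoothVF W) (p : Pt (Fin 3)) :
    DifferentiableAt ℝ (fun q => -(q 2) * (Z q 0 * W q 1 + Z q 1 * W q 0)
        + q 1 * (Z q 0 * W q 2 + Z q 2 * W q 0)) p := by
  have dZ : ∀ i, DifferentiableAt ℝ (fun q => Z q i) p := fun i => ((hZ i).differentiable (by simp)) p
  have dW : ∀ i, DifferentiableAt ℝ (fun q => W q i) p := fun i => ((hW i).differentiable (by simp)) p
  exact (((dcoordAt 2 p).neg.mul (((dZ 0).mul (dW 1)).add ((dZ 1).mul (dW 0)))).add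
    ((dcoordAt 1 p).mul (((dZ 0).mul (dW 2)).add ((dZ 2).mul (dW 0)))))

lemma DQe (W : VF (Fin 3)) (hW : SmoothVF W) (p v : Pt (Fin 3)) :
    fderiv ℝ (fun q => -(q 2) * W q 1 + q 1 * W q 2) p v
      = -(v 2) * W p 1 + -(p 2) * fderiv ℝ (fun q => W q 1) p v
        + (v 1 * W p 2 + p 1 * fderiv ℝ (fun q => W q 2) p v) := by
  have dW : ∀ i, DifferentiableAt ℝ (fun q => W q i) p := fun i => ((hW i).differentiable (by simp)) p
  rw [Dadd ((dcoordAt 2 p).fun_neg.fun_mul (dW 1)) ((dcoordAt 1 p).fun_mul (dW 2)),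
    Dmul (dcoordAt 2 p).fun_neg (dW 1), Dmul (dcoordAt 1 p) (dW 2), Dneg, Dcoord, Dcoord]
  try ring

lemma curv_zero (Z W : VF (Fin 3)) (hZ : SmoothVF Z) (hW : SmoothVF W) (p : Pt (Fin 3)) :
    curv Γex (cvf (Pi.single 0 1)) Z W p 0 =
      Z p 2 * W p 1 - Z p 1 * W p 2
        + (p 2 * Z p 1 - p 1 * Z p 2) * (-(p 2) * W p 1 + p 1 * W p 2) := by
  have dW : ∀ i, DifferentiableAt ℝ (fun q => W q i) p := fun i => ((hW i).differentiable (by simp)) p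
  have e01 : (Pi.single 0 1 : Pt (Fin 3)) 1 = 0 := by simp
  have e02 : (Pi.single 0 1 : Pt (Fin 3)) 2 = 0 := by simp
  -- inner functions
  have h1 : (fun q => conn Γex Z W q 0) = fun q => fderiv ℝ (fun r => W r 0) q (Z q)
      + (-(q 2) * (Z q 0 * W q 1 + Z q 1 * W q 0) + q 1 * (Z q 0 * W q 2 + Z q 2 * W q 0)) := by
    funext q; rw [conn_ex]; simp
  have h2 : (fun q => conn Γex (cvf (Pi.single 0 1)) W q 0)
      = fun q => fderiv ℝ (fun r => W r 0) q (Pi.single 0 1) + (-(q 2) * W q 1 + q 1 * W q 2) := by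
    funext q; rw [conn_ex]; simp [cvf]
  have h3 : bracket (cvf (Pi.single 0 1)) Z p
      = fun i' => fderiv ℝ (fun r => Z r i') p (Pi.single 0 1) := by
    funext i'; simp [bracket, cvf]
  -- pointwise components
  have cz1 : conn Γex Z W p 1 = fderiv ℝ (fun r => W r 1) p (Z p) := by rw [conn_ex]; simp
  have cz2 : conn Γex Z W p 2 = fderiv ℝ (fun r => W r 2) p (Z p) := by rw [conn_ex]; simp
  have cE0 : conn Γex (cvf (Pi.single 0 1)) W p 0
      = fderiv ℝ (fun r => W r 0) p (Pi.single 0 1) + (-(p 2) * W p 1 + p 1 * W p 2) := by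
    rw [conn_ex]; simp [cvf]
  have cE1 : conn Γex (cvf (Pi.single 0 1)) W p 1
      = fderiv ℝ (fun r => W r 1) p (Pi.single 0 1) := by rw [conn_ex]; simp [cvf]
  have cE2 : conn Γex (cvf (Pi.single 0 1)) W p 2
      = fderiv ℝ (fun r => W r 2) p (Pi.single 0 1) := by rw [conn_ex]; simp [cvf]
  -- outer terms
  have T1 : conn Γex (cvf (Pi.single 0 1)) (conn Γex Z W) p 0
      = fderiv ℝ (fun q => conn Γex Z W q 0) p (Pi.single 0 1)
        + (-(p 2) * conn Γex Z W p 1 + p 1 * conn Γex Z W p 2) := by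
    rw [conn_ex]; simp [cvf]; try ring
  have T2 : conn Γex Z (conn Γex (cvf (Pi.single 0 1)) W) p 0
      = fderiv ℝ (fun q => conn Γex (cvf (Pi.single 0 1)) W q 0) p (Z p)
        + (-(p 2) * (Z p 0 * conn Γex (cvf (Pi.single 0 1)) W p 1
              + Z p 1 * conn Γex (cvf (Pi.single 0 1)) W p 0)
          + p 1 * (Z p 0 * conn Γex (cvf (Pi.single 0 1)) W p 2
              + Z p 2 * conn Γex (cvf (Pi.single 0 1)) W p 0)) := by
    rw [conn_ex]; simp
  have T3 : conn Γex (bracket (cvf (Pi.single 0 1)) Z) W p 0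
      = fderiv ℝ (fun q => W q 0) p (bracket (cvf (Pi.single 0 1)) Z p)
        + (-(p 2) * (bracket (cvf (Pi.single 0 1)) Z p 0 * W p 1
              + bracket (cvf (Pi.single 0 1)) Z p 1 * W p 0)
          + p 1 * (bracket (cvf (Pi.single 0 1)) Z p 0 * W p 2
              + bracket (cvf (Pi.single 0 1)) Z p 2 * W p 0)) := by
    rw [conn_ex]; simp
  simp only [curv, Pi.sub_apply]
  rw [T1, T2, T3, cz1, cz2, cE0, cE1, cE2, h1, h2, h3]
  simp only []
  rw [Dadd (diff_fd_apply (hW 0) hZ p) (Qdiff Z W hZ hW p),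
    DfdA (hW 0) hZ, DQ Z W hZ hW p,
    Dadd (((diff_fderiv _ (hW 0)) p).clm_apply (differentiableAt_const _))
      (((dcoordAt 2 p).fun_neg.fun_mul (dW 1)).fun_add ((dcoordAt 1 p).fun_mul (dW 2))),
    DfdC (hW 0), DQe W hW p,
    Dsymm (hW 0) p (Pi.single 0 1) (Z p), e01, e02]
  ring

end Ex33
namespace Ex33

lemma ricci_ex (Z W : VF (Fin 3)) (hZ : SmoothVF Z) (hW : SmoothVF W) (p : Pt (Fin 3)) :
    ricci Γex Z W p = Z p 2 * W p 1 - Z p 1 * W p 2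
      + (p 2 * Z p 1 - p 1 * Z p 2) * (-(p 2) * W p 1 + p 1 * W p 2) := by
  unfold ricci
  rw [Fin.sum_univ_three, curv_zero Z W hZ hW p, curv_ne Z W hZ hW p _ 1 (by decide),
    curv_ne Z W hZ hW p _ 2 (by decide)]
  ring

lemma smooth_conn (X Y : VF (Fin 3)) (hX : SmoothVF X) (hY : SmoothVF Y) :
    SmoothVF (conn Γex X Y) := by
  intro i
  have h : (fun p => conn Γex X Y p i) = fun p => fderiv ℝ (fun q => Y q i) p (X p)
      + (if i = 0 then -(p 2) * (X p 0 * Y p 1 + X p 1 * Y p 0)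
          + p 1 * (X p 0 * Y p 2 + X p 2 * Y p 0) else 0) := by
    funext p; rw [conn_ex]
  rw [h]
  have s1 : ContDiff ℝ (⊤ : ℕ∞) fun p => fderiv ℝ (fun q => Y q i) p (X p) :=
    ((hY i).fderiv_right (by simp)).clm_apply (contDiff_pi.2 hX)
  have sc : ∀ j : Fin 3, ContDiff ℝ (⊤ : ℕ∞) fun q : Pt (Fin 3) => q j :=
    fun j => contDiff_pi.mp contDiff_id j
  by_cases hi : i = 0
  · subst hi
    simp only [if_pos rfl]
    exact s1.add (((sc 2).neg.mul (((hX 0).mul (hY 1)).add ((hX 1).mul (hY 0)))).add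
      ((sc 1).mul (((hX 0).mul (hY 2)).add ((hX 2).mul (hY 0)))))
  · simp only [if_neg hi]
    exact s1.add contDiff_const

end Ex33
/-- The connection `∇_{∂₁}∂₁ = 0`, `∇_{∂₁}∂₂ = ∇_{∂₂}∂₁ = −x₃∂₁`, `∇_{∂₁}∂₃ = ∇_{∂₃}∂₁ = x₂∂₁`
has cyclic parallel Ricci tensor. -/
theorem example33_cyclicParallel :
    CyclicParallelRic (gammaA (fun _ => 0) (fun p => -(p 2)) (fun p => p 1)) := by
  intro X hX p
  show covRic Ex33.Γex X X X p = 0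
  unfold covRic
  have hc : SmoothVF (conn Ex33.Γex X X) := Ex33.smooth_conn X X hX hX
  have dX : ∀ i, DifferentiableAt ℝ (fun q => X q i) p :=
    fun i => ((hX i).differentiable (by simp)) p
  have hG : DifferentiableAt ℝ (fun q => q 2 * X q 1 - q 1 * X q 2) p :=
    ((Ex33.dcoordAt 2 p).mul (dX 1)).sub ((Ex33.dcoordAt 1 p).mul (dX 2))
  have hR : ricci Ex33.Γex X X
      = fun q => -((q 2 * X q 1 - q 1 * X q 2) * (q 2 * X q 1 - q 1 * X q 2)) := by
    funext q; rw [Ex33.ricci_ex X X hX hX q]; ring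
  have c1 : conn Ex33.Γex X X p 1 = fderiv ℝ (fun q => X q 1) p (X p) := by
    rw [Ex33.conn_ex]; simp
  have c2 : conn Ex33.Γex X X p 2 = fderiv ℝ (fun q => X q 2) p (X p) := by
    rw [Ex33.conn_ex]; simp
  rw [Ex33.ricci_ex (conn Ex33.Γex X X) X hc hX p, Ex33.ricci_ex X (conn Ex33.Γex X X) hX hc p,
    c1, c2, hR, Ex33.Dneg, Ex33.Dmul hG hG,
    Ex33.Dsub ((Ex33.dcoordAt 2 p).fun_mul (dX 1)) ((Ex33.dcoordAt 1 p).fun_mul (dX 2)),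
    Ex33.Dmul (Ex33.dcoordAt 2 p) (dX 1), Ex33.Dmul (Ex33.dcoordAt 1 p) (dX 2),
    Ex33.Dcoord, Ex33.Dcoord]
  ring

end AffineSzabo
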